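/- For k ≥ 1, f(n-k, x, q^k s) = ((-1)^k q^{-C(k,2)} s^{1-k}) · (f(k-1,x,qs) f(n,x,s) - f(k,x,s) f(n-1,x,qs)), i.e., f(n-k,x,q^k s) is the stated linear combination of f(n,x,s) and f(n-1,x,qs) with coefficient 1/v(k) where v(k) = (-1)^k q^{C(k,2)} s^{k-1}. -/

import Mathlib

/-- Carlitz q-Fibonacci polynomials. -/
def qFib (q x s : ℝ) : ℕ → ℝ
  | 0 => 0
  | 1 => 1
  | (n+2) => x * qFib q x s (n+1) + q^n * s * qFib q x s n

lemma qFib_two (q x s : ℝ) (n : ℕ) :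
    qFib q x s (n+2) = x * qFib q x s (n+1) + q^n * s * qFib q x s n := rfl

lemma qFib_front (q x : ℝ) : ∀ (m : ℕ) (s : ℝ), qFib q x s (m+2)
    = x * qFib q x (q*s) (m+1) + q * s * qFib q x (q^2*s) m := by
  intro m
  induction m using Nat.twoStepInduction with
  | zero => intro s; simp [qFib]
  | one => intro s; simp [qFib]
  | more m ih1 ih2 =>
    intro s
    have e0 : qFib q x s (m+4) = x * qFib q x s (m+3) + q^(m+2) * s * qFib q x s (m+2) :=
      qFib_two q x s (m+2)
    have e1 : qFib q x s (m+3) = x * qFib q x (q*s) (m+2) + q * s * qFib q x (q^2*s) (m+1) :=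
      ih2 s
    have e2 := ih1 s
    have e3 : qFib q x (q*s) (m+3)
        = x * qFib q x (q*s) (m+2) + q^(m+1) * (q*s) * qFib q x (q*s) (m+1) :=
      qFib_two q x (q*s) (m+1)
    have e4 : qFib q x (q^2*s) (m+2)
        = x * qFib q x (q^2*s) (m+1) + q^m * (q^2*s) * qFib q x (q^2*s) m :=
      qFib_two q x (q^2*s) m
    show qFib q x s (m+4) = x * qFib q x (q*s) (m+3) + q * s * qFib q x (q^2*s) (m+2)
    rw [e0, e1, e2, e3, e4]
    ring

/-- auxiliary coefficient -/
def qW (q s : ℝ) : ℕ → ℝ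
  | 0 => -1
  | (j+1) => -(q^(j+1) * s) * qW q s j

lemma qW_eq (q s : ℝ) : ∀ j : ℕ, qW q s j = (-1)^(j+1) * q^((j+1).choose 2) * s^j := by
  intro j
  induction j with
  | zero => simp [qW]
  | succ j ih =>
    have hc : (j+2).choose 2 = (j+1).choose 2 + (j+1) := by
      simp [Nat.choose_succ_succ, Nat.choose_one_right, Nat.add_comm]
    show -(q^(j+1) * s) * qW q s j = (-1)^(j+2) * q^((j+2).choose 2) * s^(j+1)
    rw [ih, hc, pow_add]
    ring

lemma qFib_G (q x s : ℝ) : ∀ (j m : ℕ),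
    qFib q x (q*s) j * qFib q x s (m+j+1) - qFib q x s (j+1) * qFib q x (q*s) (m+j)
      = qW q s j * qFib q x (q^(j+1)*s) m := by
  intro j
  induction j using Nat.twoStepInduction with
  | zero =>
    intro m
    simp [qFib, qW]
  | one =>
    intro m
    have h := qFib_front q x m s
    have h1 : qFib q x (q*s) 1 = 1 := rfl
    have h2 : qFib q x s (1+1) = x := by norm_num [qFib]
    have h3 : qFib q x s (m+1+1) = qFib q x s (m+2) := by norm_num
    rw [h1, h2, h3, h]
    show _ = qW q s 1 * qFib q x (q^(1+1)*s) m
    have : q^(1+1) = q^2 := by norm_num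
    rw [this]
    simp [qW]
  | more j ih1 ih2 =>
    intro m
    have e1 : qFib q x (q*s) (j+2)
        = x * qFib q x (q*s) (j+1) + q^j * (q*s) * qFib q x (q*s) j := qFib_two q x (q*s) j
    have e2 : qFib q x s (j+3)
        = x * qFib q x s (j+2) + q^(j+1) * s * qFib q x s (j+1) := qFib_two q x s (j+1)
    have h2 := ih2 (m+1)
    have h1 := ih1 (m+2)
    rw [show m+1+(j+1)+1 = m+j+3 from by omega, show m+1+(j+1) = m+j+2 from by omega,
        show j+1+1 = j+2 from rfl] at h2
    rw [show m+2+j+1 = m+j+3 from by omega, show m+2+j = m+j+2 from by omega] at h1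
    have hf := qFib_front q x m (q^(j+1)*s)
    rw [show q*(q^(j+1)*s) = q^(j+2)*s from by ring,
        show q^2*(q^(j+1)*s) = q^(j+3)*s from by ring] at hf
    have hw2 : qW q s (j+2) = -(q^(j+2) * s) * qW q s (j+1) := rfl
    have hw1 : qW q s (j+1) = -(q^(j+1) * s) * qW q s j := rfl
    show qFib q x (q*s) (j+2) * qFib q x s (m+j+3) - qFib q x s (j+3) * qFib q x (q*s) (m+j+2)
      = qW q s (j+2) * qFib q x (q^(j+3)*s) m
    rw [e1, e2, hw2, hw1]
    linear_combination x * h2 + q^(j+1) * s * h1 + q^(j+1) * s * qW q s j * hf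
      + x * qFib q x (q^(j+2)*s) (m+1) * hw1

theorem qFib_linear_combination (q x s : ℝ) (hq : q ≠ 0) (hs : s ≠ 0)
    (n k : ℕ) (hk : 1 ≤ k) (hnk : k ≤ n) :
    qFib q x (q^k*s) (n-k)
      = (-1)^k / (q^(k.choose 2) * s^(k-1))
        * (qFib q x (q*s) (k-1) * qFib q x s n - qFib q x s k * qFib q x (q*s) (n-1)) := by
  obtain ⟨j, rfl⟩ : ∃ j, k = j+1 := ⟨k-1, by omega⟩
  obtain ⟨m, rfl⟩ : ∃ m, n = m+j+1 := ⟨n-(j+1), by omega⟩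
  have hG := qFib_G q x s j m
  rw [qW_eq] at hG
  rw [show m+j+1-(j+1) = m from by omega, show m+j+1-1 = m+j from by omega,
      show j+1-1 = j from rfl, hG]
  have hq' : q^((j+1).choose 2) ≠ 0 := pow_ne_zero _ hq
  have hs' : s^j ≠ 0 := pow_ne_zero _ hs
  have hone : ((-1:ℝ))^(j+1) * ((-1:ℝ))^(j+1) = 1 := by
    rw [← pow_add, ← two_mul, pow_mul]; norm_num
  field_simp
  linear_combination (-(qFib q x (q^(j+1)*s) m)) * hone
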